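/- If G is a graph of order n with m edges whose minimum degree is δ, then the spectral radius λ(G) of the adjacency matrix of G satisfies λ(G) ≤ (δ-1)/2 + sqrt(2m - nδ + (δ+1)²/4). -/

import Mathlib

/-!
Let `y ≥ 0` be a Perron vector, `A y = λ y`; it exists because `λ I - A` is positive
semidefinite and the entrywise absolute value of a top eigenvector has at least its Rayleigh
quotient, hence lies in the kernel of `λ I - A`. Pairing `A² y = λ² y` with the all-ones vector
gives `λ² ∑ y = ∑_k y_k ∑_{v ∼ k} d(v)`. Every vertex outside `N(k)` has degree at least `δ`,
and `k` itself contributes `d(k)`, so `∑_{v ∼ k} d(v) ≤ 2m - δ(n-1) + (δ-1) d(k)`; since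
`∑_k d(k) y_k = λ ∑ y`, this yields `λ² ≤ 2m - δ(n-1) + (δ-1) λ`, and solving the quadratic
gives the bound.
-/

open SimpleGraph Finset

/-- Spectral radius (largest adjacency eigenvalue) of a graph on `Fin n`. -/
noncomputable def specRad {n : ℕ} (G : SimpleGraph (Fin n)) : ℝ :=
  haveI := Classical.decRel G.Adj
  ⨆ i, (Matrix.IsHermitian.eigenvalues
    (by
      rw [Matrix.IsHermitian, Matrix.conjTranspose_eq_transpose_of_trivial]
      exact G.isSymm_adjMatrix : (G.adjMatrix ℝ).IsHermitian)) i

/-- `M_k(n) = K_k ∨ (K_{n-2k} + K̄_k)`: vertices `0..k-1` are the independent set,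
vertices `k..2k-1` their joint neighborhood, vertices `k..n-1` a clique. -/
def Mgraph (k n : ℕ) : SimpleGraph (Fin n) where
  Adj i j := i ≠ j ∧ ((k ≤ i.val ∧ k ≤ j.val) ∨
    (i.val < k ∧ k ≤ j.val ∧ j.val < 2 * k) ∨ (j.val < k ∧ k ≤ i.val ∧ i.val < 2 * k))
  symm := ⟨fun i j h => ⟨h.1.symm, by tauto⟩⟩
  loopless := ⟨fun i h => h.1 rfl⟩

instance (k n : ℕ) : DecidableRel (Mgraph k n).Adj := fun _ _ => instDecidableAnd

/-- `L_k(n) = K_1 ∨ (K_{n-k-1} + K_k)`: a `K_{k+1}` on vertices `0..k` and a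
`K_{n-k}` on vertices `k..n-1`, sharing the vertex `k`. -/
def Lgraph (k n : ℕ) : SimpleGraph (Fin n) where
  Adj i j := i ≠ j ∧ ((i.val ≤ k ∧ j.val ≤ k) ∨ (k ≤ i.val ∧ k ≤ j.val))
  symm := ⟨fun i j h => ⟨h.1.symm, by tauto⟩⟩
  loopless := ⟨fun i h => h.1 rfl⟩

instance (k n : ℕ) : DecidableRel (Lgraph k n).Adj := fun _ _ => instDecidableAnd

/-- `N_k(n) = K_k ∨ (K_{n-2k-1} + K̄_{k+1})`: vertices `0..k` are the independent set,
vertices `k+1..2k` their joint neighborhood, vertices `k+1..n-1` a clique. -/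
def Ngraph (k n : ℕ) : SimpleGraph (Fin n) where
  Adj i j := i ≠ j ∧ ((k + 1 ≤ i.val ∧ k + 1 ≤ j.val) ∨
    (i.val < k + 1 ∧ k + 1 ≤ j.val ∧ j.val < 2 * k + 1) ∨
    (j.val < k + 1 ∧ k + 1 ≤ i.val ∧ i.val < 2 * k + 1))
  symm := ⟨fun i j h => ⟨h.1.symm, by tauto⟩⟩
  loopless := ⟨fun i h => h.1 rfl⟩

instance (k n : ℕ) : DecidableRel (Ngraph k n).Adj := fun _ _ => instDecidableAnd

/-- The disjoint union `K_a + K_{n-a}` on `Fin n`: vertices `0..a-1` form one clique,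
vertices `a..n-1` the other. -/
def DUgraph (a n : ℕ) : SimpleGraph (Fin n) where
  Adj i j := i ≠ j ∧ ((i.val < a ∧ j.val < a) ∨ (a ≤ i.val ∧ a ≤ j.val))
  symm := ⟨fun i j h => ⟨h.1.symm, by tauto⟩⟩
  loopless := ⟨fun i h => h.1 rfl⟩

instance (a n : ℕ) : DecidableRel (DUgraph a n).Adj := fun _ _ => instDecidableAnd

/-- `G` has a Hamiltonian path. -/
def HasHamiltonianPath {V : Type*} [DecidableEq V] (G : SimpleGraph V) : Prop :=
  ∃ (u v : V) (p : G.Walk u v), p.IsHamiltonian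

/-- `G` is Hamiltonian-connected. -/
def HamiltonianConnected {V : Type*} [DecidableEq V] (G : SimpleGraph V) : Prop :=
  ∀ u v : V, u ≠ v → ∃ p : G.Walk u v, p.IsHamiltonian

open Matrix

lemma Real.le_add_sqrt_of_sq_le {x b c : ℝ} (h : x ^ 2 ≤ c + b * x) :
    x ≤ b / 2 + √(c + b ^ 2 / 4) := by
  have := Real.abs_le_sqrt (show (x - b / 2) ^ 2 ≤ c + b ^ 2 / 4 by nlinarith)
  linarith [le_abs_self (x - b / 2)]

section Perron

variable {ι : Type*} [Fintype ι]

lemma Matrix.IsHermitian.posSemidef_smul_one_sub [DecidableEq ι] {A : Matrix ι ι ℝ}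
    (hA : A.IsHermitian) {μ : ℝ} (hμ : ∀ i, hA.eigenvalues i ≤ μ) : (μ • 1 - A).PosSemidef := by
  rw [posSemidef_iff_isHermitian_and_spectrum_nonneg, ← Algebra.algebraMap_eq_smul_one,
    ← spectrum.singleton_sub_eq, hA.spectrum_real_eq_range_eigenvalues]
  refine ⟨(IsSelfAdjoint.algebraMap _ (.all μ)).sub hA, ?_⟩
  rintro _ ⟨_, rfl, _, ⟨i, rfl⟩, rfl⟩
  exact sub_nonneg.2 (hμ i)

lemma Matrix.dotProduct_mulVec_le_abs {A : Matrix ι ι ℝ} (hA : ∀ i j, 0 ≤ A i j) (x : ι → ℝ) :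
    x ⬝ᵥ A *ᵥ x ≤ |x| ⬝ᵥ A *ᵥ |x| := by
  simp only [dotProduct, mulVec, Finset.mul_sum]
  refine Finset.sum_le_sum fun i _ ↦ Finset.sum_le_sum fun j _ ↦ ?_
  calc x i * (A i j * x j) ≤ |x i * (A i j * x j)| := le_abs_self _
    _ = |x| i * (A i j * |x| j) := by simp [abs_mul, abs_of_nonneg (hA i j)]

theorem Matrix.IsHermitian.exists_nonneg_mulVec_eq [DecidableEq ι] {A : Matrix ι ι ℝ}
    (hA : A.IsHermitian) (hA₀ : ∀ i j, 0 ≤ A i j) {i₀ : ι}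
    (hi₀ : ∀ i, hA.eigenvalues i ≤ hA.eigenvalues i₀) :
    ∃ y : ι → ℝ, 0 ≤ y ∧ y ≠ 0 ∧ A *ᵥ y = hA.eigenvalues i₀ • y := by
  set μ := hA.eigenvalues i₀
  set x : ι → ℝ := ⇑(hA.eigenvectorBasis i₀)
  have hx : x ≠ 0 := fun h ↦
    hA.eigenvectorBasis.orthonormal.ne_zero i₀ (by ext j; exact congrFun h j)
  have hAx : A *ᵥ x = μ • x := hA.mulVec_eigenvectorBasis i₀
  have hM := hA.posSemidef_smul_one_sub hi₀
  have hq : ∀ z : ι → ℝ, star z ⬝ᵥ (μ • 1 - A) *ᵥ z = μ * (z ⬝ᵥ z) - z ⬝ᵥ A *ᵥ z := by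
    intro z
    simp [sub_mulVec, smul_mulVec, dotProduct_sub]
  have hzero : star |x| ⬝ᵥ (μ • 1 - A) *ᵥ |x| = 0 := by
    have hupper := hM.dotProduct_mulVec_nonneg |x|
    have hlower : μ * (|x| ⬝ᵥ |x|) ≤ |x| ⬝ᵥ A *ᵥ |x| := by
      calc μ * (|x| ⬝ᵥ |x|) = x ⬝ᵥ A *ᵥ x := by
            rw [hAx, dotProduct_smul, smul_eq_mul]
            simp only [dotProduct, Pi.abs_apply, abs_mul_abs_self]
        _ ≤ _ := dotProduct_mulVec_le_abs hA₀ x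
    rw [hq] at hupper ⊢
    linarith
  refine ⟨|x|, abs_nonneg x, by simpa using hx, ?_⟩
  rw [hM.dotProduct_mulVec_zero_iff, sub_mulVec, sub_eq_zero, smul_mulVec, one_mulVec] at hzero
  exact hzero.symm

end Perron

namespace SimpleGraph

variable {V : Type*} [Fintype V] (G : SimpleGraph V) [DecidableRel G.Adj]

lemma sum_degree_neighborFinset_le [DecidableEq V] (k : V) :
    ∑ v ∈ G.neighborFinset k, (G.degree v : ℝ) ≤
      2 * #G.edgeFinset - G.minDegree * (Fintype.card V - 1) + (G.minDegree - 1) * G.degree k := by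
  set N := G.neighborFinset k
  have htotal : ∑ v ∈ N, (G.degree v : ℝ) + ∑ v ∈ Nᶜ, (G.degree v : ℝ) = 2 * #G.edgeFinset := by
    rw [sum_add_sum_compl]
    exact_mod_cast G.sum_degrees_eq_twice_card_edges
  have hcard : (#Nᶜ : ℝ) = Fintype.card V - G.degree k := by
    rw [eq_sub_iff_add_eq, ← G.card_neighborFinset_eq_degree]
    exact_mod_cast card_compl_add_card N
  -- the excess degrees over `δ` outside `N(k)` include that of `k` itself
  have hexcess : (G.degree k - G.minDegree : ℝ) ≤ ∑ v ∈ Nᶜ, (G.degree v - G.minDegree : ℝ) :=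
    single_le_sum (f := fun v ↦ (G.degree v - G.minDegree : ℝ))
      (fun v _ ↦ sub_nonneg.2 (by exact_mod_cast G.minDegree_le_degree v))
      (mem_compl.2 (G.notMem_neighborFinset_self k))
  rw [sum_sub_distrib, sum_const, nsmul_eq_mul, hcard] at hexcess
  linarith

theorem sq_le_of_adjMatrix_mulVec_eq {y : V → ℝ} (hy₀ : 0 ≤ y) (hy : y ≠ 0) {μ : ℝ}
    (hμ : G.adjMatrix ℝ *ᵥ y = μ • y) :
    μ ^ 2 ≤ 2 * #G.edgeFinset - G.minDegree * (Fintype.card V - 1) + (G.minDegree - 1) * μ := by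
  classical
  set A := G.adjMatrix ℝ
  set c : ℝ := 2 * #G.edgeFinset - G.minDegree * (Fintype.card V - 1)
  have ht : 0 < 1 ⬝ᵥ y := by
    rw [one_dotProduct]
    obtain ⟨j, hj⟩ := Function.ne_iff.1 hy
    exact sum_pos' (fun i _ ↦ hy₀ i) ⟨j, mem_univ j, lt_of_le_of_ne (hy₀ j) (Ne.symm hj)⟩
  have hdeg : (1 ᵥ* A) ⬝ᵥ y = μ * (1 ⬝ᵥ y) := by
    rw [← dotProduct_mulVec, hμ, dotProduct_smul, smul_eq_mul]
  have hwalks : (1 ᵥ* A ᵥ* A) ⬝ᵥ y = μ ^ 2 * (1 ⬝ᵥ y) := by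
    rw [← dotProduct_mulVec, ← dotProduct_mulVec, hμ, mulVec_smul, hμ, smul_smul,
      dotProduct_smul, smul_eq_mul, sq]
  have hrow : 1 ᵥ* A ᵥ* A ≤ c • 1 + (G.minDegree - 1 : ℝ) • (1 ᵥ* A) := fun k ↦ by
    simpa [A, c] using G.sum_degree_neighborFinset_le k
  have hbound := dotProduct_le_dotProduct_of_nonneg_right hrow hy₀
  rw [hwalks, add_dotProduct, smul_dotProduct, smul_dotProduct, hdeg, smul_eq_mul,
    smul_eq_mul] at hbound
  exact le_of_mul_le_mul_right (by linarith) ht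

end SimpleGraph

lemma specRad_eq_iSup_eigenvalues {n : ℕ} (G : SimpleGraph (Fin n)) [DecidableRel G.Adj]
    (hA : (G.adjMatrix ℝ).IsHermitian) : specRad G = ⨆ i, hA.eigenvalues i := by
  unfold specRad
  congr!

theorem exists_nonneg_adjMatrix_mulVec_eq_specRad {n : ℕ} [NeZero n] (G : SimpleGraph (Fin n))
    [DecidableRel G.Adj] :
    ∃ y : Fin n → ℝ, 0 ≤ y ∧ y ≠ 0 ∧ G.adjMatrix ℝ *ᵥ y = specRad G • y := by
  have hA : (G.adjMatrix ℝ).IsHermitian := G.isSymm_adjMatrix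
  obtain ⟨i₀, hi₀⟩ := Finite.exists_max hA.eigenvalues
  have hspec : specRad G = hA.eigenvalues i₀ := by
    rw [specRad_eq_iSup_eigenvalues G hA]
    exact le_antisymm (ciSup_le hi₀) (le_ciSup (Finite.bddAbove_range _) i₀)
  rw [hspec]
  exact hA.exists_nonneg_mulVec_eq (fun i j ↦ by by_cases h : G.Adj i j <;> simp [h]) hi₀

/-- Hong–Shu–Fang / Nikiforov: `λ(G) ≤ (δ-1)/2 + √(2m - nδ + (δ+1)²/4)`. -/
theorem stmt_0 (n : ℕ) (G : SimpleGraph (Fin n)) [DecidableRel G.Adj] :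
    specRad G ≤ ((G.minDegree : ℝ) - 1) / 2 +
      Real.sqrt (2 * (G.edgeFinset.card : ℝ) - (n : ℝ) * (G.minDegree : ℝ) +
        ((G.minDegree : ℝ) + 1) ^ 2 / 4) := by
  have hquad : specRad G ^ 2 ≤ 2 * (#G.edgeFinset : ℝ) - G.minDegree * (n - 1)
      + (G.minDegree - 1) * specRad G := by
    cases n with
    | zero => simp [specRad]
    | succ n =>
      obtain ⟨y, hy₀, hy, hμ⟩ := exists_nonneg_adjMatrix_mulVec_eq_specRad G
      simpa using G.sq_le_of_adjMatrix_mulVec_eq hy₀ hy hμ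
  convert Real.le_add_sqrt_of_sq_le hquad using 3
  ring
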